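/- Let L be an atomistic complete lattice (length ≥ 2), T a t-norm on C(L), and T̄ the generated t-norm on L. Then T̄ = T_D (the drastic t-norm) if and only if T(u,u) = 0 for every atom u of L. -/

import Mathlib

def IsTnorm {L : Type*} [PartialOrder L] [BoundedOrder L] (T : L → L → L) : Prop :=
  (∀ x : L, Monotone (T x)) ∧ (∀ x y : L, T x y = T y x) ∧
  (∀ x y z : L, T x (T y z) = T (T x y) z) ∧ (∀ x : L, T x ⊤ = x)

open Classical in
noncomputable def TD {L : Type*} [Lattice L] [BoundedOrder L] (x y : L) : L :=
  if x = ⊤ ∨ y = ⊤ then x ⊓ y else ⊥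

def CL (L : Type*) [CompleteLattice L] : Set L := {x | IsAtom x ∨ x = ⊥ ∨ x = ⊤}

def kappa {L : Type*} [CompleteLattice L] (x : L) : Set L :=
  {u | u ∈ CL L ∧ u ≠ ⊥ ∧ u ≤ x}

noncomputable def Tbar {L : Type*} [CompleteLattice L] (T : L → L → L) (x y : L) : L :=
  ⨆ u ∈ kappa x, ⨆ v ∈ kappa y, T u v

def IsTnormOn {L : Type*} [PartialOrder L] [OrderTop L] (C : Set L) (T : L → L → L) : Prop :=
  (∀ x ∈ C, ∀ y ∈ C, T x y ∈ C) ∧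
  (∀ x ∈ C, ∀ y ∈ C, ∀ z ∈ C, y ≤ z → T x y ≤ T x z) ∧
  (∀ x ∈ C, ∀ y ∈ C, T x y = T y x) ∧
  (∀ x ∈ C, ∀ y ∈ C, ∀ z ∈ C, T x (T y z) = T (T x y) z) ∧
  (∀ x ∈ C, T x ⊤ = x)

open Classical in
noncomputable def Talpha {L : Type*} [CompleteLattice L] (α : Set L) (x y : L) : L :=
  if x = ⊤ ∨ y = ⊤ then x ⊓ y else if x = y ∧ x ∈ α then x else ⊥

/-! `T̄` only sees values `T u v` with `u, v ∈ C(L)`, and there `T u v ≤ u ⊓ v`. Since `⊤ ∈ κ(⊤)`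
and `T(⊤, a) = a`, atomisticity gives `T̄(⊤, y) = y`, as for `T_D`. For `x, y ≠ ⊤` the sets `κ(x)`,
`κ(y)` consist of atoms, and distinct atoms meet in `⊥`; so `T̄(x, y) = ⊥` for all such `x, y`
exactly when `T(u, u) = ⊥` for every atom `u` (an atom is not `⊤`, as `L` has length `≥ 2`). -/

theorem IsAtom.ne_top_of_ne_bot_of_ne_top {L : Type*} [PartialOrder L] [BoundedOrder L]
    {u w : L} (hu : IsAtom u) (hwb : w ≠ ⊥) (hwt : w ≠ ⊤) : u ≠ ⊤ := by
  rintro rfl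
  exact hwb (hu.2 w (lt_top_iff_ne_top.mpr hwt))

section TnormOn

variable {L : Type*} [PartialOrder L] [OrderTop L] {C : Set L} {T : L → L → L}

theorem IsTnormOn.top_apply (hT : IsTnormOn C T) (hC : ⊤ ∈ C) {x : L} (hx : x ∈ C) :
    T ⊤ x = x := by
  rw [hT.2.2.1 ⊤ hC x hx, hT.2.2.2.2 x hx]

theorem IsTnormOn.apply_le_right (hT : IsTnormOn C T) (hC : ⊤ ∈ C) {x y : L} (hx : x ∈ C)
    (hy : y ∈ C) : T x y ≤ y := by
  rw [hT.2.2.1 x hx y hy]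
  calc T y x ≤ T y ⊤ := hT.2.1 y hy x hx ⊤ hC le_top
    _ = y := hT.2.2.2.2 y hy

theorem IsTnormOn.apply_le_left (hT : IsTnormOn C T) (hC : ⊤ ∈ C) {x y : L} (hx : x ∈ C)
    (hy : y ∈ C) : T x y ≤ x := by
  rw [hT.2.2.1 x hx y hy]
  exact hT.apply_le_right hC hy hx

end TnormOn

section Generated

variable {L : Type*} [CompleteLattice L] {T : L → L → L}

theorem top_mem_CL : (⊤ : L) ∈ CL L := Or.inr (Or.inr rfl)

theorem mem_kappa_of_isAtom {a x : L} (ha : IsAtom a) (hax : a ≤ x) : a ∈ kappa x :=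
  ⟨Or.inl ha, ha.1, hax⟩

theorem top_mem_kappa_top [Nontrivial L] : (⊤ : L) ∈ kappa ⊤ :=
  ⟨top_mem_CL, top_ne_bot, le_rfl⟩

theorem isAtom_of_mem_kappa {u x : L} (hu : u ∈ kappa x) (hx : x ≠ ⊤) : IsAtom u := by
  obtain ⟨hu | hu | rfl, hne, hle⟩ := hu
  · exact hu
  · exact absurd hu hne
  · exact absurd (top_le_iff.mp hle) hx

theorem le_Tbar {u v x y : L} (hu : u ∈ kappa x) (hv : v ∈ kappa y) : T u v ≤ Tbar T x y :=
  le_iSup₂_of_le u hu (le_iSup₂_of_le v hv le_rfl)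

theorem Tbar_le_inf (hT : IsTnormOn (CL L) T) (x y : L) : Tbar T x y ≤ x ⊓ y :=
  iSup₂_le fun _u hu => iSup₂_le fun _v hv =>
    le_inf ((hT.apply_le_left top_mem_CL hu.1 hv.1).trans hu.2.2)
      ((hT.apply_le_right top_mem_CL hu.1 hv.1).trans hv.2.2)

theorem Tbar_comm (hT : IsTnormOn (CL L) T) (x y : L) : Tbar T x y = Tbar T y x := by
  unfold Tbar
  rw [iSup₂_comm]
  exact iSup_congr fun v => iSup_congr fun hv => iSup_congr fun u => iSup_congr fun hu =>
    hT.2.2.1 u hu.1 v hv.1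

theorem Tbar_top_left [IsAtomistic L] [Nontrivial L] (hT : IsTnormOn (CL L) T) (y : L) :
    Tbar T ⊤ y = y := by
  refine le_antisymm ((Tbar_le_inf hT ⊤ y).trans_eq (top_inf_eq y)) ?_
  conv_lhs => rw [← sSup_atoms_le_eq y]
  refine sSup_le fun a ⟨ha, hay⟩ => ?_
  have hak : a ∈ kappa y := mem_kappa_of_isAtom ha hay
  calc a = T ⊤ a := (hT.top_apply top_mem_CL hak.1).symm
    _ ≤ Tbar T ⊤ y := le_Tbar top_mem_kappa_top hak

theorem Tbar_top_right [IsAtomistic L] [Nontrivial L] (hT : IsTnormOn (CL L) T) (x : L) :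
    Tbar T x ⊤ = x := by
  rw [Tbar_comm hT, Tbar_top_left hT]

theorem Tbar_eq_bot (hT : IsTnormOn (CL L) T) (hdiag : ∀ u : L, IsAtom u → T u u = ⊥)
    {x y : L} (hx : x ≠ ⊤) (hy : y ≠ ⊤) : Tbar T x y = ⊥ := by
  refine le_bot_iff.mp (iSup₂_le fun u hu => iSup₂_le fun v hv => ?_)
  have hua := isAtom_of_mem_kappa hu hx
  have hva := isAtom_of_mem_kappa hv hy
  obtain rfl | huv := eq_or_ne u v
  · exact (hdiag u hua).le
  · calc T u v ≤ u ⊓ v :=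
          le_inf (hT.apply_le_left top_mem_CL hu.1 hv.1) (hT.apply_le_right top_mem_CL hu.1 hv.1)
      _ = ⊥ := (hua.disjoint_of_ne hva huv).eq_bot

end Generated

theorem stmt8 {L : Type*} [CompleteLattice L] [IsAtomistic L]
    (hlen : ∃ x : L, x ≠ ⊥ ∧ x ≠ ⊤) (T : L → L → L)
    (hT : IsTnormOn (CL L) T) :
    (∀ x y : L, Tbar T x y = TD x y) ↔ ∀ u : L, IsAtom u → T u u = ⊥ := by
  obtain ⟨w, hwb, hwt⟩ := hlen
  have : Nontrivial L := ⟨⟨w, ⊥, hwb⟩⟩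
  constructor
  · intro h u hu
    have hut : u ≠ ⊤ := hu.ne_top_of_ne_bot_of_ne_top hwb hwt
    have huk : u ∈ kappa u := mem_kappa_of_isAtom hu le_rfl
    simpa [h, TD, hut] using le_Tbar (T := T) huk huk
  · intro h x y
    by_cases hx : x = ⊤
    · simp [hx, TD, Tbar_top_left hT]
    by_cases hy : y = ⊤
    · simp [hy, TD, Tbar_top_right hT]
    simp [TD, hx, hy, Tbar_eq_bot hT h hx hy]
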